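/- Let G be a graph with a Δ-disk representation (D_v)_{v ∈ V(G)}, and define a binary relation on V(G) by u ≺ v if and only if x_u < x_v, y_u < y_v and D_u ∩ D_v = ∅. Then ≺ is a strict partial order (irreflexive and transitive), and for all distinct vertices u, v, u and v are non-adjacent in G if and only if u ≺ v or v ≺ u. In particular G is a co-comparability graph with respect to ≺. -/

import Mathlib

/-- A Δ-disk representation of a simple graph `G`: each vertex `v` gets a
closed disk with center `c v = (x_v, y_v)`, `x_v > 0`, `y_v > 0`, and radius
`r v` with `max x_v y_v ≤ r v < √(x_v² + y_v²)` (the disk meets both axes but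
misses the origin); distinct vertices are adjacent iff their disks intersect. -/
def IsDeltaDiskRep {V : Type*} (G : SimpleGraph V)
    (c : V → EuclideanSpace ℝ (Fin 2)) (r : V → ℝ) : Prop :=
  (∀ v, 0 < c v 0) ∧ (∀ v, 0 < c v 1) ∧
  (∀ v, max (c v 0) (c v 1) ≤ r v) ∧ (∀ v, r v < dist (c v) 0) ∧
  ∀ u v, u ≠ v → (G.Adj u v ↔
    (Metric.closedBall (c u) (r u) ∩ Metric.closedBall (c v) (r v)).Nonempty)

/-- The relation `u ≺ v` on a Δ-disk representation: `x_u < x_v`, `y_u < y_v`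
and the disks of `u` and `v` are disjoint. -/
def DeltaPrec {V : Type*} (c : V → EuclideanSpace ℝ (Fin 2)) (r : V → ℝ)
    (u v : V) : Prop :=
  c u 0 < c v 0 ∧ c u 1 < c v 1 ∧
    Metric.closedBall (c u) (r u) ∩ Metric.closedBall (c v) (r v) = ∅



open Metric Real

private lemma dist_coord (x y : EuclideanSpace ℝ (Fin 2)) :
    dist x y = Real.sqrt ((x 0 - y 0)^2 + (x 1 - y 1)^2) := by
  rw [EuclideanSpace.dist_eq, Fin.sum_univ_two]
  simp [Real.dist_eq, sq_abs]

private lemma mem_cb_iff {c p : EuclideanSpace ℝ (Fin 2)} {r : ℝ} (hr : 0 ≤ r) :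
    p ∈ closedBall c r ↔ (p 0 - c 0)^2 + (p 1 - c 1)^2 ≤ r^2 := by
  rw [Metric.mem_closedBall, dist_coord, Real.sqrt_le_iff]
  constructor
  · rintro ⟨-, h⟩; exact h
  · intro h; exact ⟨hr, h⟩

private lemma inter_nonempty_iff {c₁ c₂ : EuclideanSpace ℝ (Fin 2)} {r₁ r₂ : ℝ}
    (h₁ : 0 ≤ r₁) (h₂ : 0 ≤ r₂) :
    (Metric.closedBall c₁ r₁ ∩ Metric.closedBall c₂ r₂).Nonempty ↔ dist c₁ c₂ ≤ r₁ + r₂ := by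
  rw [← Set.not_disjoint_iff_nonempty_inter, disjoint_closedBall_closedBall_iff h₁ h₂,
    not_lt]

private lemma key_core (D2 ru rv E F : ℝ) (hru : 0 ≤ ru) (hrv : 0 ≤ rv)
    (hE : E^2 ≤ D2*rv^2) (hF : F^2 ≤ D2*ru^2)
    (hD : (ru+rv)^2 < D2) : 0 < E + D2 + F := by
  have hD2pos : 0 < D2 := lt_of_le_of_lt (sq_nonneg _) hD
  by_contra hc
  push_neg at hc
  have hEF : E*F ≤ D2*(ru*rv) := by
    rcases le_or_gt (E*F) 0 with h | h
    · exact h.trans (by positivity)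
    · have hprod : E^2*F^2 ≤ (D2*rv^2)*(D2*ru^2) :=
        mul_le_mul hE hF (sq_nonneg F) (by positivity)
      nlinarith [hprod, h, mul_nonneg (mul_nonneg hD2pos.le hru) hrv]
  nlinarith [sq_nonneg (E+F)]

private lemma cs_aux (n1 n2 a b r : ℝ) (h : a^2 + b^2 ≤ r^2) :
    (n1*a + n2*b)^2 ≤ (n1^2 + n2^2)*r^2 := by
  nlinarith [sq_nonneg (n1*b - n2*a),
    mul_le_mul_of_nonneg_left h (by positivity : (0:ℝ) ≤ n1^2 + n2^2)]

private lemma key_ineq (xu yu ru xv yv rv p0 p1 q0 q1 : ℝ)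
    (hru : 0 ≤ ru) (hrv : 0 ≤ rv)
    (hp : (p0-xu)^2 + (p1-yu)^2 ≤ ru^2)
    (hq : (q0-xv)^2 + (q1-yv)^2 ≤ rv^2)
    (hd : (ru+rv)^2 < (xv-xu)^2 + (yv-yu)^2) :
    (xv-xu)*p0 + (yv-yu)*p1 < (xv-xu)*q0 + (yv-yu)*q1 := by
  have hE := cs_aux (xv-xu) (yv-yu) (q0-xv) (q1-yv) rv hq
  have hF := cs_aux (xv-xu) (yv-yu) (xu-p0) (yu-p1) ru (by nlinarith [hp])
  have h0 := key_core ((xv-xu)^2 + (yv-yu)^2) ru rv _ _ hru hrv hE hF hd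
  nlinarith [h0]

private lemma chord_sep (xu yu ru xv yv rv : ℝ)
    (hxu : 0 < xu) (hxv : 0 < xv)
    (hru : xu ≤ ru) (hrv : xv ≤ rv) (hyuv : yu < yv)
    (hdisj : ∀ a b : ℝ, (a-xu)^2 + (b-yu)^2 ≤ ru^2 → (a-xv)^2 + (b-yv)^2 ≤ rv^2 → False) :
    yu + Real.sqrt (ru^2 - xu^2) < yv - Real.sqrt (rv^2 - xv^2) := by
  have h1 : (0:ℝ) ≤ ru^2 - xu^2 := by nlinarith
  have h2 : (0:ℝ) ≤ rv^2 - xv^2 := by nlinarith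
  set tu := Real.sqrt (ru^2 - xu^2) with htu
  set tv := Real.sqrt (rv^2 - xv^2) with htv
  have htu0 : 0 ≤ tu := Real.sqrt_nonneg _
  have htv0 : 0 ≤ tv := Real.sqrt_nonneg _
  have htu2 : tu^2 = ru^2 - xu^2 := Real.sq_sqrt h1
  have htv2 : tv^2 = rv^2 - xv^2 := Real.sq_sqrt h2
  by_contra hcon
  push_neg at hcon
  set t := max (yu - tu) (yv - tv) with ht
  refine hdisj 0 t ?_ ?_
  · have hl : yu - tu ≤ t := le_max_left _ _
    have hu : t ≤ yu + tu := max_le (by linarith) (by linarith)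
    nlinarith
  · have hl : yv - tv ≤ t := le_max_right _ _
    have hu : t ≤ yv + tv := max_le (by linarith) (by linarith)
    nlinarith

private lemma le_sqrt_bound (a s : ℝ) (h : a^2 ≤ s) :
    -Real.sqrt s ≤ a ∧ a ≤ Real.sqrt s := by
  have hs0 : 0 ≤ s := le_trans (sq_nonneg a) h
  have ht := Real.sqrt_nonneg s
  have ht2 := Real.sq_sqrt hs0
  constructor <;> nlinarith

private lemma drop_coord (x y rr p0 p1 : ℝ) (hx : 0 < x)
    (hp : (p0-x)^2 + (p1-y)^2 ≤ rr^2) (h0 : p0 ≤ 0) :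
    (p1-y)^2 ≤ rr^2 - x^2 := by
  nlinarith [mul_nonneg (neg_nonneg.2 h0) (by linarith : (0:ℝ) ≤ 2*x - p0)]

private lemma half_plane (n1 n2 p0 p1 a a' : ℝ) (hn1 : 0 < n1) (hn2 : 0 < n2)
    (hp0 : 0 < p0) (hp1 : 0 < p1) (ha : 0 < a) (ha' : 0 < a')
    (hA : n1*p0 + n2*p1 < n1*a) (hB : n1*p0 + n2*p1 < n2*a') :
    a'*p0 + a*p1 < a*a' := by
  have hS : 0 < n1*p0 + n2*p1 := add_pos (mul_pos hn1 hp0) (mul_pos hn2 hp1)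
  nlinarith [mul_lt_mul_of_pos_right hA (mul_pos ha' hp0),
    mul_lt_mul_of_pos_right hB (mul_pos ha hp1), hS]

private lemma half_plane' (m1 m2 p0 p1 b b' : ℝ) (hm1 : 0 < m1) (hm2 : 0 < m2)
    (hp0 : 0 < p0) (hp1 : 0 < p1) (hb : 0 < b) (hb' : 0 < b')
    (hC : m1*b < m1*p0 + m2*p1) (hD : m2*b' < m1*p0 + m2*p1) :
    b*b' < b'*p0 + b*p1 := by
  have hT : 0 < m1*p0 + m2*p1 := add_pos (mul_pos hm1 hp0) (mul_pos hm2 hp1)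
  nlinarith [mul_lt_mul_of_pos_right hC (mul_pos hb' hp0),
    mul_lt_mul_of_pos_right hD (mul_pos hb hp1), hT]

private lemma wedge_contra (av a'v bv b'v p0 p1 : ℝ)
    (hav : 0 < av) (ha'v : 0 < a'v) (hab : av ≤ bv) (hab' : a'v ≤ b'v)
    (hp0 : 0 < p0) (hp1 : 0 < p1)
    (hF1 : a'v*p0 + av*p1 < av*a'v) (hF2 : bv*b'v < b'v*p0 + bv*p1) : False := by
  have hbv : 0 < bv := hav.trans_le hab
  have hb'v : 0 < b'v := ha'v.trans_le hab'
  have t1 : 0 ≤ a'v*b'v*p0*(bv - av) :=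
    mul_nonneg (mul_nonneg (mul_nonneg ha'v.le hb'v.le) hp0.le) (sub_nonneg.2 hab)
  have t2 : 0 ≤ av*bv*p1*(b'v - a'v) :=
    mul_nonneg (mul_nonneg (mul_nonneg hav.le hbv.le) hp1.le) (sub_nonneg.2 hab')
  nlinarith [mul_lt_mul_of_pos_left hF2 (mul_pos hav ha'v),
    mul_lt_mul_of_pos_left hF1 (mul_pos hbv hb'v), t1, t2]

set_option maxHeartbeats 2000000 in
private lemma trans_core (xu yu ru xv yv rv xw yw rw p0 p1 : ℝ)
    (hxu : 0 < xu) (hyu : 0 < yu) (hxv : 0 < xv) (hyv : 0 < yv)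
    (hxw : 0 < xw) (hyw : 0 < yw)
    (hrxu : xu ≤ ru) (hryu : yu ≤ ru) (hrxv : xv ≤ rv) (hryv : yv ≤ rv)
    (hrxw : xw ≤ rw) (hryw : yw ≤ rw)
    (hr2v : rv^2 < xv^2 + yv^2)
    (hxuv : xu < xv) (hyuv : yu < yv) (hxvw : xv < xw) (hyvw : yv < yw)
    (hptuv : ∀ a b : ℝ, (a-xu)^2 + (b-yu)^2 ≤ ru^2 → (a-xv)^2 + (b-yv)^2 ≤ rv^2 → False)
    (hptvw : ∀ a b : ℝ, (a-xv)^2 + (b-yv)^2 ≤ rv^2 → (a-xw)^2 + (b-yw)^2 ≤ rw^2 → False)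
    (h2uv : (ru + rv)^2 < (xv - xu)^2 + (yv - yu)^2)
    (h2vw : (rv + rw)^2 < (xw - xv)^2 + (yw - yv)^2)
    (hpu : (p0 - xu)^2 + (p1 - yu)^2 ≤ ru^2)
    (hpw : (p0 - xw)^2 + (p1 - yw)^2 ≤ rw^2) : False := by
  have hru : 0 < ru := hxu.trans_le hrxu
  have hrv : 0 < rv := hxv.trans_le hrxv
  have hrw : 0 < rw := hxw.trans_le hrxw
  have hych_uv := chord_sep xu yu ru xv yv rv hxu hxv hrxu hrxv hyuv hptuv
  have hych_vw := chord_sep xv yv rv xw yw rw hxv hxw hrxv hrxw hyvw hptvw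
  have hxch_uv := chord_sep yu xu ru yv xv rv hyu hyv hryu hryv hxuv
    (fun a b h1 h2 => hptuv b a (by linarith) (by linarith))
  have hxch_vw := chord_sep yv xv rv yw xw rw hyv hyw hryv hryw hxvw
    (fun a b h1 h2 => hptvw b a (by linarith) (by linarith))
  have hp0pos : 0 < p0 := by
    by_contra hle
    push_neg at hle
    have h1 := drop_coord xu yu ru p0 p1 hxu hpu hle
    have h2 := drop_coord xw yw rw p0 p1 hxw hpw hle
    have e1 := (le_sqrt_bound _ _ h1).2
    have e2 := (le_sqrt_bound _ _ h2).1
    have mid := Real.sqrt_nonneg (rv^2 - xv^2)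
    linarith only [hych_uv, hych_vw, e1, e2, mid]
  have hp1pos : 0 < p1 := by
    by_contra hle
    push_neg at hle
    have h1 := drop_coord yu xu ru p1 p0 hyu (by linarith only [hpu]) hle
    have h2 := drop_coord yw xw rw p1 p0 hyw (by linarith only [hpw]) hle
    have e1 := (le_sqrt_bound _ _ h1).2
    have e2 := (le_sqrt_bound _ _ h2).1
    have mid := Real.sqrt_nonneg (rv^2 - yv^2)
    linarith only [hxch_uv, hxch_vw, e1, e2, mid]
  clear hych_uv hych_vw hxch_uv hxch_vw
  set sv := Real.sqrt (rv^2 - yv^2) with hsvdef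
  set tv := Real.sqrt (rv^2 - xv^2) with htvdef
  have hsv0 : 0 ≤ sv := Real.sqrt_nonneg _
  have htv0 : 0 ≤ tv := Real.sqrt_nonneg _
  have hsv2 : sv^2 = rv^2 - yv^2 :=
    Real.sq_sqrt (sub_nonneg.2 (pow_le_pow_left₀ hyv.le hryv 2))
  have htv2 : tv^2 = rv^2 - xv^2 :=
    Real.sq_sqrt (sub_nonneg.2 (pow_le_pow_left₀ hxv.le hrxv 2))
  have hav : 0 < xv - sv := sub_pos.2 ((Real.sqrt_lt' hxv).2 (by linarith))
  have ha'v : 0 < yv - tv := sub_pos.2 ((Real.sqrt_lt' hyv).2 (by linarith))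
  have hbv : 0 < xv + sv := by linarith
  have hb'v : 0 < yv + tv := by linarith
  have qa : ((xv - sv) - xv)^2 + ((0:ℝ) - yv)^2 ≤ rv^2 := by linarith only [hsv2]
  have qb : ((xv + sv) - xv)^2 + ((0:ℝ) - yv)^2 ≤ rv^2 := by linarith only [hsv2]
  have qa' : ((0:ℝ) - xv)^2 + ((yv - tv) - yv)^2 ≤ rv^2 := by linarith only [htv2]
  have qb' : ((0:ℝ) - xv)^2 + ((yv + tv) - yv)^2 ≤ rv^2 := by linarith only [htv2]
  have h2wv : (rw + rv)^2 < (xv - xw)^2 + (yv - yw)^2 := by linarith only [h2vw]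
  have hA := key_ineq xu yu ru xv yv rv p0 p1 (xv - sv) 0 hru.le hrv.le hpu qa h2uv
  have hB := key_ineq xu yu ru xv yv rv p0 p1 0 (yv - tv) hru.le hrv.le hpu qa' h2uv
  have hC := key_ineq xw yw rw xv yv rv p0 p1 (xv + sv) 0 hrw.le hrv.le hpw qb h2wv
  have hD := key_ineq xw yw rw xv yv rv p0 p1 0 (yv + tv) hrw.le hrv.le hpw qb' h2wv
  have hn1 : 0 < xv - xu := by linarith
  have hn2 : 0 < yv - yu := by linarith
  have hm1 : 0 < xw - xv := by linarith
  have hm2 : 0 < yw - yv := by linarith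
  have hA' : (xv - xu) * p0 + (yv - yu) * p1 < (xv - xu) * (xv - sv) := by linarith only [hA]
  have hB' : (xv - xu) * p0 + (yv - yu) * p1 < (yv - yu) * (yv - tv) := by linarith only [hB]
  have hC' : (xw - xv) * (xv + sv) < (xw - xv) * p0 + (yw - yv) * p1 := by linarith only [hC]
  have hD' : (yw - yv) * (yv + tv) < (xw - xv) * p0 + (yw - yv) * p1 := by linarith only [hD]
  have hF1 := half_plane (xv - xu) (yv - yu) p0 p1 (xv - sv) (yv - tv)
    hn1 hn2 hp0pos hp1pos hav ha'v hA' hB'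
  have hF2 := half_plane' (xw - xv) (yw - yv) p0 p1 (xv + sv) (yv + tv)
    hm1 hm2 hp0pos hp1pos hbv hb'v hC' hD'
  exact wedge_contra (xv - sv) (yv - tv) (xv + sv) (yv + tv) p0 p1
    hav ha'v (by linarith) (by linarith) hp0pos hp1pos hF1 hF2

set_option maxHeartbeats 1000000 in
/-- Any Δ-disk graph is a co-comparability graph: the relation `≺` is a strict
partial order (irreflexive and transitive), and two distinct vertices are
non-adjacent iff they are comparable under `≺`. -/
theorem deltaDiskGraph_is_cocomparability
    {V : Type*} (G : SimpleGraph V)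
    (c : V → EuclideanSpace ℝ (Fin 2)) (r : V → ℝ)
    (h : IsDeltaDiskRep G c r) :
    (∀ u : V, ¬ DeltaPrec c r u u) ∧
    (∀ u v w : V, DeltaPrec c r u v → DeltaPrec c r v w → DeltaPrec c r u w) ∧
    (∀ u v : V, u ≠ v → (¬ G.Adj u v ↔ DeltaPrec c r u v ∨ DeltaPrec c r v u)) := by
  obtain ⟨hx, hy, hr, hrd, hadj⟩ := h
  have hrx : ∀ v, c v 0 ≤ r v := fun v => (le_max_left _ _).trans (hr v)
  have hry : ∀ v, c v 1 ≤ r v := fun v => (le_max_right _ _).trans (hr v)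
  have hrpos : ∀ v, 0 < r v := fun v => (hx v).trans_le (hrx v)
  have hr2 : ∀ v, (r v)^2 < (c v 0)^2 + (c v 1)^2 := by
    intro v
    have h1 := hrd v
    rw [dist_coord] at h1
    have h0 : (0 : EuclideanSpace ℝ (Fin 2)) 0 = 0 := rfl
    have h0' : (0 : EuclideanSpace ℝ (Fin 2)) 1 = 0 := rfl
    rw [h0, h0'] at h1
    have h2 := (Real.lt_sqrt (hrpos v).le).mp h1
    nlinarith [h2]
  have hdisj_sq : ∀ u v : V,
      Metric.closedBall (c u) (r u) ∩ Metric.closedBall (c v) (r v) = ∅ →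
      (r u + r v)^2 < (c v 0 - c u 0)^2 + (c v 1 - c u 1)^2 := by
    intro u v hemp
    have hne : ¬ (Metric.closedBall (c u) (r u) ∩ Metric.closedBall (c v) (r v)).Nonempty := by
      rw [hemp]; exact Set.not_nonempty_empty
    rw [inter_nonempty_iff (hrpos u).le (hrpos v).le, not_le, dist_coord] at hne
    have h2 := (Real.lt_sqrt (add_pos (hrpos u) (hrpos v)).le).mp hne
    nlinarith [h2]
  have hdisjpt : ∀ u v : V,
      Metric.closedBall (c u) (r u) ∩ Metric.closedBall (c v) (r v) = ∅ →
      ∀ a b : ℝ, (a - c u 0)^2 + (b - c u 1)^2 ≤ (r u)^2 →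
        (a - c v 0)^2 + (b - c v 1)^2 ≤ (r v)^2 → False := by
    intro u v hemp a b h1 h2
    have hmem1 : (WithLp.toLp 2 ![a,b] : EuclideanSpace ℝ (Fin 2)) ∈ Metric.closedBall (c u) (r u) := by
      rw [mem_cb_iff (hrpos u).le]
      simpa using h1
    have hmem2 : (WithLp.toLp 2 ![a,b] : EuclideanSpace ℝ (Fin 2)) ∈ Metric.closedBall (c v) (r v) := by
      rw [mem_cb_iff (hrpos v).le]
      simpa using h2
    exact Set.eq_empty_iff_forall_notMem.mp hemp _ ⟨hmem1, hmem2⟩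
  refine ⟨?_, ?_, ?_⟩
  · rintro u ⟨h1, -, -⟩
    exact lt_irrefl _ h1
  · rintro u v w ⟨hxuv, hyuv, hduv⟩ ⟨hxvw, hyvw, hdvw⟩
    refine ⟨hxuv.trans hxvw, hyuv.trans hyvw, ?_⟩
    rw [← Set.not_nonempty_iff_eq_empty]
    rintro ⟨p, hpu, hpw⟩
    rw [mem_cb_iff (hrpos u).le] at hpu
    rw [mem_cb_iff (hrpos w).le] at hpw
    exact trans_core (c u 0) (c u 1) (r u) (c v 0) (c v 1) (r v) (c w 0) (c w 1) (r w)
      (p 0) (p 1) (hx u) (hy u) (hx v) (hy v) (hx w) (hy w)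
      (hrx u) (hry u) (hrx v) (hry v) (hrx w) (hry w) (hr2 v)
      hxuv hyuv hxvw hyvw (hdisjpt u v hduv) (hdisjpt v w hdvw)
      (hdisj_sq u v hduv) (hdisj_sq v w hdvw) hpu hpw
  · intro u v huv
    rw [hadj u v huv]
    have hkey : ∀ a b : V,
        Metric.closedBall (c a) (r a) ∩ Metric.closedBall (c b) (r b) = ∅ →
        c a 0 ≤ c b 0 → c b 1 ≤ c a 1 → False := by
      intro a b hemp hxab hyba
      refine hdisjpt a b hemp (c a 0) (c b 1) ?_ ?_
      · nlinarith [hy a, hy b, hry a]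
      · nlinarith [hx a, hx b, hrx b]
    constructor
    · intro hne
      have hemp : Metric.closedBall (c u) (r u) ∩ Metric.closedBall (c v) (r v) = ∅ :=
        Set.not_nonempty_iff_eq_empty.mp hne
      have hemp' : Metric.closedBall (c v) (r v) ∩ Metric.closedBall (c u) (r u) = ∅ := by
        rwa [Set.inter_comm]
      rcases lt_trichotomy (c u 0) (c v 0) with h0 | h0 | h0
      · left
        refine ⟨h0, ?_, hemp⟩
        by_contra hle
        push_neg at hle
        exact hkey u v hemp h0.le hle
      · exfalso
        rcases le_total (c u 1) (c v 1) with h1 | h1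
        · exact hkey v u hemp' h0.ge h1
        · exact hkey u v hemp h0.le h1
      · right
        refine ⟨h0, ?_, hemp'⟩
        by_contra hle
        push_neg at hle
        exact hkey v u hemp' h0.le hle
    · rintro (⟨-, -, he⟩ | ⟨-, -, he⟩) hne
      · obtain ⟨q, hq⟩ := hne
        exact Set.eq_empty_iff_forall_notMem.mp he q hq
      · obtain ⟨q, hq1, hq2⟩ := hne
        exact Set.eq_empty_iff_forall_notMem.mp he q ⟨hq2, hq1⟩
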